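/- K₂ of a finite field is trivial: for 𝔽_q, the group (𝔽_q^× ⊗ 𝔽_q^×)/⟨a ⊗ (1−a) : a ≠ 0, 1⟩ is the trivial group. -/

import Mathlib

open scoped TensorProduct

noncomputable section

variable (F : Type) [Field F]

/-- The set of Steinberg relations `a ⊗ (1 − a)` (for `a ≠ 0, 1`) inside `F^× ⊗_ℤ F^×`. -/
def steinbergSet : Set (TensorProduct ℤ (Additive Fˣ) (Additive Fˣ)) :=
  {x | ∃ u v : Fˣ, (u : F) + (v : F) = 1 ∧
    x = (Additive.ofMul u) ⊗ₜ[ℤ] (Additive.ofMul v)}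

/-- The Milnor K-group `K₂(F) = (F^× ⊗_ℤ F^×)/⟨a ⊗ (1−a) : a ≠ 0, 1⟩`. -/
abbrev K2 := (TensorProduct ℤ (Additive Fˣ) (Additive Fˣ)) ⧸ Submodule.span ℤ (steinbergSet F)

/-!
The tensor square of a cyclic group `⟨g⟩` is generated by `g ⊗ g`, so it suffices to show that
`g ⊗ g` is a sum of Steinberg relations. In every field the symbol `{u, -u}` vanishes, and hence
`2 {u, u} = {u, (-1)²} = 0`. In characteristic `2` this already gives `{g, g} = {g, -g} = 0`.
Otherwise pick nonsquares `a + b = 1`; they are odd powers `g ^ i`, `g ^ j` of the generator, so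
`{a, b} = i j {g, g}` kills an odd multiple of `{g, g}`, which together with `2 {g, g} = 0`
kills `{g, g}`.
-/

open Additive Set Subgroup

lemma FiniteField.exists_not_isSquare_add_eq_one {K : Type*} [Field K] [Finite K]
    (hK : ringChar K ≠ 2) : ∃ a b : K, ¬IsSquare a ∧ ¬IsSquare b ∧ a + b = 1 := by
  by_contra! h
  obtain ⟨c, hc⟩ := FiniteField.exists_nonsquare hK
  have hc0 : c ≠ 0 := by rintro rfl; exact hc IsSquare.zero
  -- Otherwise `s ↦ 1 - c s` would be a self-injection of the nonzero squares missing `1`.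
  let S : Set K := {x | x ≠ 0 ∧ IsSquare x}
  have hcs : ∀ s ∈ S, ¬IsSquare (c * s) := fun s ⟨hs0, hs⟩ hcs ↦ hc <| by
    simpa [hs0] using hcs.mul hs.inv
  have hmaps : MapsTo (fun s ↦ 1 - c * s) S S := fun s hs ↦ by
    refine ⟨fun h0 ↦ hcs s hs ?_, ?_⟩
    · rw [← sub_eq_zero.mp h0]; exact IsSquare.one
    · by_contra hsq
      exact h _ _ (hcs s hs) hsq (add_sub_cancel _ _)
  have hinj : InjOn (fun s ↦ 1 - c * s) S := fun s _ t _ hst ↦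
    mul_left_cancel₀ hc0 (sub_right_injective hst)
  obtain ⟨s, ⟨hs0, -⟩, hs⟩ :=
    ((S.toFinite.injOn_iff_bijOn_of_mapsTo hmaps).mp hinj).surjOn
      (show (1 : K) ∈ S from ⟨one_ne_zero, IsSquare.one⟩)
  exact hs0 ((mul_eq_zero.mp (sub_eq_self.mp hs)).resolve_left hc0)

lemma odd_of_not_isSquare_val_zpow {M : Type*} [Monoid M] {g : Mˣ} {i : ℤ}
    (h : ¬IsSquare ((g ^ i : Mˣ) : M)) : Odd i := by
  by_contra hi
  exact h ((Int.not_odd_iff_even.mp hi).isSquare_zpow g |>.map (Units.coeHom M))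

lemma ofMul_zpow_tmul_ofMul_zpow {G : Type*} [CommGroup G] (g : G) (i j : ℤ) :
    ofMul (g ^ i) ⊗ₜ[ℤ] ofMul (g ^ j) = (i * j) • (ofMul g ⊗ₜ[ℤ] ofMul g) := by
  rw [ofMul_zpow, ofMul_zpow, TensorProduct.smul_tmul_smul]

lemma Submodule.eq_top_of_ofMul_tmul_ofMul_mem {G : Type*} [CommGroup G] {g : G}
    (hg : ∀ x, x ∈ zpowers g) {N : Submodule ℤ (Additive G ⊗[ℤ] Additive G)}
    (h : ofMul g ⊗ₜ[ℤ] ofMul g ∈ N) : N = ⊤ := by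
  refine eq_top_iff.mpr <| (TensorProduct.span_tmul_eq_top ..).ge.trans (Submodule.span_le.mpr ?_)
  rintro _ ⟨a, b, rfl⟩
  obtain ⟨i, hi⟩ := mem_zpowers_iff.mp (hg a.toMul)
  obtain ⟨j, hj⟩ := mem_zpowers_iff.mp (hg b.toMul)
  rw [← ofMul_toMul a, ← ofMul_toMul b, ← hi, ← hj, ofMul_zpow_tmul_ofMul_zpow]
  exact N.smul_mem _ h

variable {F}

lemma ofMul_tmul_ofMul_mem_span_steinbergSet {u v : Fˣ} (h : (u : F) + v = 1) :
    ofMul u ⊗ₜ[ℤ] ofMul v ∈ Submodule.span ℤ (steinbergSet F) :=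
  Submodule.subset_span ⟨u, v, h, rfl⟩

lemma ofMul_tmul_ofMul_neg_mem_span_steinbergSet (u : Fˣ) :
    ofMul u ⊗ₜ[ℤ] ofMul (-u) ∈ Submodule.span ℤ (steinbergSet F) := by
  obtain rfl | hu := eq_or_ne u 1
  · simp
  have h1 : (1 : F) - u ≠ 0 := sub_ne_zero.mpr fun h ↦ hu (Units.val_eq_one.mp h.symm)
  have h2 : (1 : F) - (u : F)⁻¹ ≠ 0 :=
    sub_ne_zero.mpr fun h ↦ hu (Units.val_eq_one.mp (inv_eq_one.mp h.symm))
  have hneg : -u = Units.mk0 _ h1 / Units.mk0 _ h2 := by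
    ext
    simp only [Units.val_neg, Units.val_div_eq_div_val, Units.val_mk0]
    rw [eq_div_iff h2, mul_sub, mul_one, neg_mul, mul_inv_cancel₀ u.ne_zero]
    ring
  have hinv : ofMul u ⊗ₜ[ℤ] ofMul (Units.mk0 _ h2) =
      -(ofMul u⁻¹ ⊗ₜ[ℤ] ofMul (Units.mk0 _ h2)) := by
    rw [ofMul_inv, TensorProduct.neg_tmul, neg_neg]
  rw [hneg, ofMul_div, TensorProduct.tmul_sub, hinv, sub_neg_eq_add]
  exact add_mem (ofMul_tmul_ofMul_mem_span_steinbergSet (by simp))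
    (ofMul_tmul_ofMul_mem_span_steinbergSet (by simp))

lemma two_zsmul_ofMul_tmul_ofMul_self_mem_span_steinbergSet (u : Fˣ) :
    (2 : ℤ) • (ofMul u ⊗ₜ[ℤ] ofMul u) ∈ Submodule.span ℤ (steinbergSet F) := by
  have hu : ofMul u = ofMul (-u) + ofMul (-1 : Fˣ) := by rw [← ofMul_mul, neg_mul_neg, mul_one]
  have hsq : (2 : ℤ) • ofMul (-1 : Fˣ) = 0 := by rw [← ofMul_zpow]; simp
  nth_rw 2 [hu]
  rw [TensorProduct.tmul_add, smul_add, ← TensorProduct.tmul_smul (2 : ℤ) _ (ofMul (-1 : Fˣ)),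
    hsq, TensorProduct.tmul_zero, add_zero]
  exact Submodule.smul_mem _ _ (ofMul_tmul_ofMul_neg_mem_span_steinbergSet u)

lemma exists_odd_zsmul_ofMul_tmul_ofMul_mem_span_steinbergSet [Finite F] (hF : ringChar F ≠ 2)
    {g : Fˣ} (hg : ∀ x, x ∈ zpowers g) :
    ∃ n : ℤ, Odd n ∧ n • (ofMul g ⊗ₜ[ℤ] ofMul g) ∈ Submodule.span ℤ (steinbergSet F) := by
  obtain ⟨a, b, ha, hb, hab⟩ := FiniteField.exists_not_isSquare_add_eq_one hF
  have ha0 : a ≠ 0 := by rintro rfl; exact ha IsSquare.zero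
  have hb0 : b ≠ 0 := by rintro rfl; exact hb IsSquare.zero
  obtain ⟨i, hi⟩ := mem_zpowers_iff.mp (hg (Units.mk0 a ha0))
  obtain ⟨j, hj⟩ := mem_zpowers_iff.mp (hg (Units.mk0 b hb0))
  refine ⟨i * j, ?_, ?_⟩
  · exact (odd_of_not_isSquare_val_zpow (by rwa [hi])).mul
      (odd_of_not_isSquare_val_zpow (by rwa [hj]))
  · rw [← ofMul_zpow_tmul_ofMul_zpow, hi, hj]
    exact ofMul_tmul_ofMul_mem_span_steinbergSet (by simpa using hab)

/-- `K₂` of a finite field is trivial. -/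
theorem k2_finite_field_trivial (F : Type) [Field F] [Fintype F] :
    Subsingleton (K2 F) := by
  rw [Submodule.Quotient.subsingleton_iff]
  obtain ⟨g, hg⟩ := IsCyclic.exists_generator (α := Fˣ)
  refine Submodule.eq_top_of_ofMul_tmul_ofMul_mem hg ?_
  by_cases hF : ringChar F = 2
  · have : CharP F 2 := ringChar.of_eq hF
    have hg2 : -g = g := Units.ext <| (Units.val_neg g).trans (CharTwo.neg_eq _)
    simpa [hg2] using ofMul_tmul_ofMul_neg_mem_span_steinbergSet g
  · obtain ⟨n, ⟨k, rfl⟩, hn⟩ := exists_odd_zsmul_ofMul_tmul_ofMul_mem_span_steinbergSet hF hg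
    have h2 := two_zsmul_ofMul_tmul_ofMul_self_mem_span_steinbergSet g
    have := Submodule.sub_mem _ hn (Submodule.smul_mem _ k h2)
    rwa [smul_smul, ← sub_smul, show 2 * k + 1 - k * 2 = 1 by ring, one_smul] at this
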